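/- A 4-dimensional subspace Q ⊂ ℝ⁷ is coassociative (i.e., its orthogonal complement Q^⊥ is a 3-dimensional associative plane) if and only if φ₀ restricted to Q vanishes identically. -/

import Mathlib

/-!
For `u ≠ 0`, left multiplication `x ↦ u × x` is an isometry up to the factor `‖u‖` on `u^⊥`,
since `⟪u × v, u × w⟫ = ⟪u, u⟫⟪v, w⟫ - ⟪u, v⟫⟪u, w⟫`. Fix `u ≠ 0` in the 4-plane `Q`; then
`u^⊥ ∩ Q` and `Qᗮ` are both 3-dimensional and `φ₀(u, x, z) = ⟪u × x, z⟫`.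

If `φ₀` vanishes on `Q`, left multiplication by `u` maps `u^⊥ ∩ Q` into, hence onto, `Qᗮ`, and the
identity expressing `φ₀(u × x, u × y, z)` through `φ₀(u, x, y)`, `φ₀(x, y, z)`, `φ₀(u, y, z)`,
`φ₀(u, x, z)` shows that `Qᗮ` is closed under `×`. Conversely, if `Qᗮ` is closed under `×`,
left multiplication by `u` maps `Qᗮ` onto `u^⊥ ∩ Q`, so `Q = ℝu ⊕ u × Qᗮ`, and `φ₀(u, v, ·)`
vanishes on both summands.
-/

noncomputable section
open scoped RealInnerProductSpace

/-- ℝ⁷ with its standard Euclidean inner product. -/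
abbrev V7 := EuclideanSpace ℝ (Fin 7)

/-- The 3-form `dxᵢ ∧ dxⱼ ∧ dxₖ` evaluated on `(u,v,w)`. -/
def trip (i j k : Fin 7) (u v w : V7) : ℝ :=
  u i * (v j * w k - v k * w j) - u j * (v i * w k - v k * w i)
    + u k * (v i * w j - v j * w i)

/-- The standard `G₂` 3-form
`φ₀ = dx₁₂₃ + dx₁₄₅ + dx₁₆₇ + dx₂₄₆ − dx₂₅₇ − dx₃₄₇ − dx₃₅₆` (0-indexed). -/
def phi0 (u v w : V7) : ℝ :=
  trip 0 1 2 u v w + trip 0 3 4 u v w + trip 0 5 6 u v w + trip 1 3 5 u v w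
    - trip 1 4 6 u v w - trip 2 3 6 u v w - trip 2 4 5 u v w

/-- The cross product on ℝ⁷ defined by `⟨u × v, w⟩ = φ₀(u,v,w)`. -/
def cross7 (u v : V7) : V7 :=
  WithLp.toLp 2 (fun i => phi0 u v (EuclideanSpace.single i 1) : Fin 7 → ℝ)

open Module Submodule

lemma real_inner_eq_sum_seven (u v : V7) : ⟪u, v⟫ =
    u 0 * v 0 + u 1 * v 1 + u 2 * v 2 + u 3 * v 3 + u 4 * v 4 + u 5 * v 5 + u 6 * v 6 := by
  simp only [PiLp.inner_apply, RCLike.inner_apply, Real.ringHom_apply, Fin.sum_univ_seven]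
  ring

lemma cross7_ofLp (u v : V7) : (cross7 u v).ofLp =
    ![u 1 * v 2 - u 2 * v 1 + u 3 * v 4 - u 4 * v 3 + u 5 * v 6 - u 6 * v 5,
      u 2 * v 0 - u 0 * v 2 + u 3 * v 5 - u 5 * v 3 + u 6 * v 4 - u 4 * v 6,
      u 0 * v 1 - u 1 * v 0 + u 5 * v 4 - u 4 * v 5 + u 6 * v 3 - u 3 * v 6,
      u 4 * v 0 - u 0 * v 4 + u 5 * v 1 - u 1 * v 5 + u 2 * v 6 - u 6 * v 2,
      u 0 * v 3 - u 3 * v 0 + u 1 * v 6 - u 6 * v 1 + u 2 * v 5 - u 5 * v 2,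
      u 6 * v 0 - u 0 * v 6 + u 1 * v 3 - u 3 * v 1 + u 4 * v 2 - u 2 * v 4,
      u 0 * v 5 - u 5 * v 0 + u 3 * v 2 - u 2 * v 3 + u 4 * v 1 - u 1 * v 4] := by
  ext i
  fin_cases i <;>
    simp only [cross7, phi0, trip, PiLp.single_apply, Fin.reduceFinMk, Fin.zero_eta, Fin.mk_one,
      Fin.isValue, Fin.reduceEq, ↓reduceIte, Matrix.cons_val_zero, Matrix.cons_val_one,
      Matrix.cons_val] <;>
    ring

lemma inner_cross7 (u v w : V7) : ⟪cross7 u v, w⟫ = phi0 u v w := by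
  simp only [real_inner_eq_sum_seven, cross7_ofLp, phi0, trip, Matrix.cons_val_zero,
    Matrix.cons_val_one, Matrix.cons_val]
  ring

lemma phi0_cyclic (u v w : V7) : phi0 u v w = phi0 v w u := by
  simp only [phi0, trip]
  ring

lemma inner_cross7_self_left (u v : V7) : ⟪cross7 u v, u⟫ = 0 := by
  rw [inner_cross7]
  simp only [phi0, trip]
  ring

lemma inner_cross7_cross7 (u v w : V7) :
    ⟪cross7 u v, cross7 u w⟫ = ⟪u, u⟫ * ⟪v, w⟫ - ⟪u, v⟫ * ⟪u, w⟫ := by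
  simp only [real_inner_eq_sum_seven, cross7_ofLp, Matrix.cons_val_zero, Matrix.cons_val_one,
    Matrix.cons_val]
  ring

lemma phi0_cross7_cross7 (u x y z : V7) :
    phi0 (cross7 u x) (cross7 u y) z =
      2 * phi0 u x y * ⟪u, z⟫ - ⟪u, u⟫ * phi0 x y z
        + ⟪u, x⟫ * phi0 u y z - ⟪u, y⟫ * phi0 u x z := by
  simp only [real_inner_eq_sum_seven, phi0, trip, cross7_ofLp, Matrix.cons_val_zero,
    Matrix.cons_val_one, Matrix.cons_val]
  ring

lemma norm_cross7_of_inner_eq_zero {u v : V7} (huv : ⟪u, v⟫ = 0) :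
    ‖cross7 u v‖ = ‖u‖ * ‖v‖ := by
  have h : ‖cross7 u v‖ ^ 2 = (‖u‖ * ‖v‖) ^ 2 := by
    rw [← real_inner_self_eq_norm_sq, inner_cross7_cross7, huv, real_inner_self_eq_norm_sq,
      real_inner_self_eq_norm_sq]
    ring
  exact (pow_left_inj₀ (norm_nonneg _) (by positivity) two_ne_zero).1 h

def crossLeft (u : V7) : V7 →ₗ[ℝ] V7 where
  toFun := cross7 u
  map_add' x y := ext_inner_right ℝ fun w => by
    rw [inner_add_left, inner_cross7, inner_cross7, inner_cross7]
    simp only [phi0, trip, PiLp.add_apply]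
    ring
  map_smul' r x := ext_inner_right ℝ fun w => by
    rw [real_inner_smul_left, inner_cross7, inner_cross7]
    simp only [phi0, trip, PiLp.smul_apply, smul_eq_mul, RingHom.id_apply]
    ring

@[simp]
lemma crossLeft_apply (u v : V7) : crossLeft u v = cross7 u v := rfl

lemma map_crossLeft_eq {u : V7} (hu : u ≠ 0) {A B : Submodule ℝ V7} (hA : A ≤ (ℝ ∙ u)ᗮ)
    (hAB : finrank ℝ B ≤ finrank ℝ A) (hmaps : A.map (crossLeft u) ≤ B) :
    A.map (crossLeft u) = B := by
  have hinj : Function.Injective ((crossLeft u).domRestrict A) := by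
    refine (injective_iff_map_eq_zero _).2 fun x hx => ?_
    have hux : ⟪u, (x : V7)⟫ = 0 := mem_orthogonal_singleton_iff_inner_right.1 (hA x.2)
    have hnorm := norm_cross7_of_inner_eq_zero hux
    rw [← crossLeft_apply, ← LinearMap.domRestrict_apply, hx, norm_zero] at hnorm
    simpa [norm_ne_zero_iff.2 hu] using hnorm.symm
  refine eq_of_le_of_finrank_le hmaps ?_
  rwa [← LinearMap.range_domRestrict, LinearMap.finrank_range_of_inj hinj]

lemma finrank_orthogonal_span_singleton_inf_add_one {𝕜 E : Type*} [RCLike 𝕜]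
    [NormedAddCommGroup E] [InnerProductSpace 𝕜 E] {K : Submodule 𝕜 E} [FiniteDimensional 𝕜 K]
    {u : E} (hu : u ∈ K) (hu0 : u ≠ 0) :
    finrank 𝕜 ((𝕜 ∙ u)ᗮ ⊓ K : Submodule 𝕜 E) + 1 = finrank 𝕜 K := by
  rw [← finrank_add_inf_finrank_orthogonal ((span_singleton_le_iff_mem _ _).2 hu),
    finrank_span_singleton hu0, add_comm]

lemma finrank_add_finrank_orthogonal_seven (Q : Submodule ℝ V7) :
    finrank ℝ Q + finrank ℝ Qᗮ = 7 :=
  (finrank_add_finrank_orthogonal Q).trans finrank_euclideanSpace_fin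

def IsAssociative (P : Submodule ℝ V7) : Prop :=
  ∀ u ∈ P, ∀ v ∈ P, cross7 u v ∈ P

theorem phi0_eq_zero_of_isAssociative_orthogonal {Q : Submodule ℝ V7} (hQ : finrank ℝ Q ≤ 4)
    (hassoc : IsAssociative Qᗮ) {u v w : V7} (hu : u ∈ Q) (hv : v ∈ Q) (hw : w ∈ Q) :
    phi0 u v w = 0 := by
  rcases eq_or_ne u 0 with rfl | hu0
  · simp [phi0, trip]
  have hsum := finrank_add_finrank_orthogonal_seven Q
  have hrank := finrank_orthogonal_span_singleton_inf_add_one hu hu0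
  have hle : ℝ ∙ u ≤ Q := (span_singleton_le_iff_mem _ _).2 hu
  have hmaps : Qᗮ.map (crossLeft u) ≤ (ℝ ∙ u)ᗮ ⊓ Q := by
    intro _ h
    obtain ⟨a, ha, rfl⟩ := mem_map.1 h
    refine mem_inf.2 ⟨mem_orthogonal_singleton_iff_inner_left.2 (inner_cross7_self_left u a), ?_⟩
    rw [← Q.orthogonal_orthogonal, mem_orthogonal']
    intro b hb
    rw [crossLeft_apply, inner_cross7, phi0_cyclic, ← inner_cross7]
    exact (mem_orthogonal' Q _).1 (hassoc a ha b hb) u hu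
  have hQ_eq : ℝ ∙ u ⊔ Qᗮ.map (crossLeft u) = Q := by
    rw [map_crossLeft_eq hu0 (orthogonal_le hle) (by omega) hmaps,
      sup_orthogonal_inf_of_hasOrthogonalProjection hle]
  rw [← hQ_eq] at hw
  obtain ⟨_, ht, _, ⟨a, ha, rfl⟩, rfl⟩ := mem_sup.1 hw
  obtain ⟨t, rfl⟩ := mem_span_singleton.1 ht
  have hua : ⟪u, a⟫ = 0 := (mem_orthogonal Q a).1 ha u hu
  have hva : ⟪v, a⟫ = 0 := (mem_orthogonal Q a).1 ha v hv
  rw [← inner_cross7, inner_add_right, real_inner_smul_right, inner_cross7_self_left,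
    crossLeft_apply, inner_cross7_cross7, hua, hva]
  ring

theorem isAssociative_orthogonal_of_phi0_eq_zero {Q : Submodule ℝ V7} (hQ : 4 ≤ finrank ℝ Q)
    (hphi : ∀ u ∈ Q, ∀ v ∈ Q, ∀ w ∈ Q, phi0 u v w = 0) : IsAssociative Qᗮ := by
  intro a ha b hb
  obtain ⟨u, hu, hu0⟩ := Q.exists_mem_ne_zero_of_ne_bot (by rintro rfl; simp at hQ)
  have hsum := finrank_add_finrank_orthogonal_seven Q
  have hrank := finrank_orthogonal_span_singleton_inf_add_one hu hu0
  have hmaps : ((ℝ ∙ u)ᗮ ⊓ Q).map (crossLeft u) ≤ Qᗮ := by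
    intro _ h
    obtain ⟨x, ⟨-, hx⟩, rfl⟩ := mem_map.1 h
    rw [mem_orthogonal']
    intro z hz
    rw [crossLeft_apply, inner_cross7]
    exact hphi u hu x hx z hz
  rw [← map_crossLeft_eq hu0 inf_le_left (by omega) hmaps] at ha hb
  obtain ⟨x, ⟨-, hx⟩, rfl⟩ := ha
  obtain ⟨y, ⟨-, hy⟩, rfl⟩ := hb
  rw [mem_orthogonal']
  intro z hz
  rw [crossLeft_apply, crossLeft_apply, inner_cross7, phi0_cross7_cross7, hphi u hu x hx y hy,
    hphi x hx y hy z hz, hphi u hu y hy z hz, hphi u hu x hx z hz]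
  ring

/-- a 4-plane `Q` is coassociative (its orthogonal complement is
a 3-dimensional associative plane) iff `φ₀` vanishes identically on `Q`. -/
theorem coassociative_iff_phi0_vanishes (Q : Submodule ℝ V7)
    (hdim : Module.finrank ℝ Q = 4) :
    (Module.finrank ℝ Qᗮ = 3 ∧ ∀ u ∈ Qᗮ, ∀ v ∈ Qᗮ, cross7 u v ∈ Qᗮ) ↔
      (∀ u ∈ Q, ∀ v ∈ Q, ∀ w ∈ Q, phi0 u v w = 0) := by
  constructor
  · rintro ⟨-, hassoc⟩ u hu v hv w hw
    exact phi0_eq_zero_of_isAssociative_orthogonal hdim.le hassoc hu hv hw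
  · intro hphi
    have hsum := finrank_add_finrank_orthogonal_seven Q
    exact ⟨by omega, isAssociative_orthogonal_of_phi0_eq_zero hdim.ge hphi⟩
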